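/- Let w : Fin n → ℝ with w i > 0 and Σ_i w i = 1, set λ i := −Real.log (w i) and K := the diagonal matrix with entries λ i, and let Ω̂ ∈ EuclideanSpace ℂ (Fin n × Fin n) be the Schmidt vector with components Ω̂(i,j) = if i = j then Real.sqrt (w i) else 0. For an n×n complex matrix A and s ∈ ℝ define σ_s(A) := Matrix.exp((−i·s)•K) · A · Matrix.exp((i·s)•K) and the analytically continued σ_{s−i}(A) := Matrix.exp((−i·s − 1)•K) · A · Matrix.exp((i·s + 1)•K). Then the vacuum vector Ω̂ satisfies the KMS condition with respect to the modular evolution on the algebra B(H)⊗1: for all n×n complex matrices A, B and all s ∈ ℝ, ⟨Ω̂, ((σ_s(A) · B) ⊗ₖ 1).mulVec Ω̂⟩ = ⟨Ω̂, ((B · σ_{s−i}(A)) ⊗ₖ 1).mulVec Ω̂⟩. (The paper's Observation (KMS-Property): (Ω|σ_s(A) B Ω) = (Ω|B σ_{s−i}(A) Ω) for the modular automorphism group σ_s = Δ^{is}(·)Δ^{−is}.) -/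

import Mathlib

open Matrix NormedSpace
open scoped Kronecker InnerProductSpace

/-- The component function of a vector in `H ⊗ H`, viewed as an element of
`EuclideanSpace ℂ (Fin n × Fin n)`. -/
noncomputable def vecE {n : ℕ} (v : (Fin n × Fin n) → ℂ) :
    EuclideanSpace ℂ (Fin n × Fin n) :=
  (WithLp.equiv 2 ((Fin n × Fin n) → ℂ)).symm v

/-!
With `ρ = e^{-K} = diag(w)`, the vacuum expectation of `M ⊗ 1` in the Schmidt vector is the
Gibbs state `tr(ρ M)`. Writing `σ_{s-i}(A) = ρ σ_s(A) ρ⁻¹`, the KMS identity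
`tr(ρ σ_s(A) B) = tr(ρ B ρ σ_s(A) ρ⁻¹)` is cyclicity of the trace.
-/

namespace Matrix

variable {m 𝔸 : Type*} [Fintype m] [DecidableEq m]
  [NormedCommRing 𝔸] [NormedAlgebra ℚ 𝔸] [CompleteSpace 𝔸]

theorem exp_add_smul (a b : 𝔸) (K : Matrix m m 𝔸) :
    exp ((a + b) • K) = exp (a • K) * exp (b • K) := by
  rw [add_smul]
  exact exp_add_of_commute _ _ ((Commute.refl K).smul_left a |>.smul_right b)

theorem exp_mul_exp_neg (K : Matrix m m 𝔸) : exp K * exp (-K) = 1 := by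
  rw [← exp_add_of_commute _ _ (Commute.neg_right (Commute.refl K)), add_neg_cancel, exp_zero]

theorem trace_exp_neg_mul_kms (K A B : Matrix m m 𝔸) (z : 𝔸) :
    trace (exp (-K) * (exp ((-z) • K) * A * exp (z • K) * B))
      = trace (exp (-K) * (B * (exp ((-z - 1) • K) * A * exp ((z + 1) • K)))) := by
  set σA := exp ((-z) • K) * A * exp (z • K)
  have hshift : exp ((-z - 1) • K) * A * exp ((z + 1) • K) = exp (-K) * σA * exp K := by
    rw [show -z - 1 = -1 + -z by ring, exp_add_smul, exp_add_smul, neg_one_smul, one_smul]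
    simp only [σA, Matrix.mul_assoc]
  calc trace (exp (-K) * (σA * B))
      = trace (B * (exp (-K) * σA)) := by rw [← Matrix.mul_assoc, trace_mul_comm]
    _ = trace (exp K * (exp (-K) * (B * (exp (-K) * σA)))) := by
        rw [← Matrix.mul_assoc (exp K), exp_mul_exp_neg, Matrix.one_mul]
    _ = trace (exp (-K) * (B * (exp (-K) * σA * exp K))) := by
        rw [trace_mul_comm]; simp only [Matrix.mul_assoc]
    _ = _ := by rw [hshift]

theorem exp_neg_diagonal_neg_log {m : Type*} [Fintype m] [DecidableEq m] {w : m → ℝ}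
    (hw : ∀ i, 0 < w i) :
    exp (-diagonal (fun i => ((-Real.log (w i) : ℝ) : ℂ))) = diagonal (fun i => (w i : ℂ)) := by
  rw [diagonal_neg, exp_diagonal]
  congr 1
  funext i
  rw [Pi.coe_exp, ← Complex.exp_eq_exp_ℂ, Complex.ofReal_neg, neg_neg,
    ← Complex.ofReal_exp, Real.exp_log (hw i)]

end Matrix

theorem kronecker_one_mulVec_schmidt {n : ℕ} (w : Fin n → ℝ) (Ωf : (Fin n × Fin n) → ℂ)
    (hΩf : ∀ i j, Ωf (i, j) = if i = j then (Real.sqrt (w i) : ℂ) else 0)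
    (M : Matrix (Fin n) (Fin n) ℂ) (i j : Fin n) :
    ((M ⊗ₖ (1 : Matrix (Fin n) (Fin n) ℂ)) *ᵥ Ωf) (i, j) = M i j * (Real.sqrt (w j) : ℂ) := by
  simp [Matrix.mulVec, dotProduct, Fintype.sum_prod_type, Matrix.one_apply, hΩf]

theorem inner_schmidt_kronecker_one {n : ℕ} (w : Fin n → ℝ) (hw : ∀ i, 0 ≤ w i)
    (Ωf : (Fin n × Fin n) → ℂ)
    (hΩf : ∀ i j, Ωf (i, j) = if i = j then (Real.sqrt (w i) : ℂ) else 0)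
    (M : Matrix (Fin n) (Fin n) ℂ) :
    ⟪vecE Ωf, vecE ((M ⊗ₖ (1 : Matrix (Fin n) (Fin n) ℂ)) *ᵥ Ωf)⟫_ℂ
      = trace (diagonal (fun i => (w i : ℂ)) * M) := by
  simp only [PiLp.inner_apply, vecE, WithLp.equiv_symm_apply, RCLike.inner_apply,
    Fintype.sum_prod_type, kronecker_one_mulVec_schmidt w Ωf hΩf, hΩf]
  simp only [apply_ite (starRingEnd ℂ), Complex.conj_ofReal, map_zero, mul_ite, mul_zero,
    Finset.sum_ite_eq, Finset.mem_univ, if_true, trace, diag_apply, diagonal_mul]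
  refine Finset.sum_congr rfl fun i _ => ?_
  rw [mul_assoc, ← Complex.ofReal_mul, Real.mul_self_sqrt (hw i), mul_comm]

theorem vacuum_KMS_property_general
    (n : ℕ) (w : Fin n → ℝ) (hw : ∀ i, 0 < w i)
    (lam : Fin n → ℝ) (hlam : ∀ i, lam i = - Real.log (w i))
    (K : Matrix (Fin n) (Fin n) ℂ)
    (hK : K = Matrix.diagonal (fun i => (lam i : ℂ)))
    (Ωf : (Fin n × Fin n) → ℂ)
    (hΩf : ∀ i j, Ωf (i, j) = if i = j then (Real.sqrt (w i) : ℂ) else 0)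
    (Ω : EuclideanSpace ℂ (Fin n × Fin n)) (hΩ : Ω = vecE Ωf)
    (σ : ℝ → Matrix (Fin n) (Fin n) ℂ → Matrix (Fin n) (Fin n) ℂ)
    (hσ : ∀ (s : ℝ) (A : Matrix (Fin n) (Fin n) ℂ),
      σ s A = NormedSpace.exp ((-(Complex.I * s)) • K) * A * NormedSpace.exp ((Complex.I * s) • K))
    (σc : ℝ → Matrix (Fin n) (Fin n) ℂ → Matrix (Fin n) (Fin n) ℂ)
    (hσc : ∀ (s : ℝ) (A : Matrix (Fin n) (Fin n) ℂ),
      σc s A = NormedSpace.exp ((-(Complex.I * s) - 1) • K) * A * NormedSpace.exp ((Complex.I * s + 1) • K)) :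
    ∀ (A B : Matrix (Fin n) (Fin n) ℂ) (s : ℝ),
      ⟪Ω, vecE (((σ s A * B) ⊗ₖ (1 : Matrix (Fin n) (Fin n) ℂ)).mulVec Ωf)⟫_ℂ
        = ⟪Ω, vecE (((B * σc s A) ⊗ₖ (1 : Matrix (Fin n) (Fin n) ℂ)).mulVec Ωf)⟫_ℂ := by
  intro A B s
  obtain rfl : lam = fun i => -Real.log (w i) := funext hlam
  have hρ : diagonal (fun i => (w i : ℂ)) = exp (-K) := by
    rw [hK, exp_neg_diagonal_neg_log hw]
  have hw₀ : ∀ i, 0 ≤ w i := fun i => (hw i).le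
  rw [hΩ, inner_schmidt_kronecker_one w hw₀ Ωf hΩf, inner_schmidt_kronecker_one w hw₀ Ωf hΩf,
    hσ, hσc, hρ]
  exact trace_exp_neg_mul_kms K A B (Complex.I * s)

/-- KMS property of the Schmidt-form vacuum `Ω̂` (weights `w i`, modular Hamiltonian
`K = diag(λ i)` with `λ i = -log (w i)`) for the modular evolution on `B(H)⊗1`:
`⟨Ω̂, (σ_s(A)·B ⊗ 1) Ω̂⟩ = ⟨Ω̂, (B·σ_{s-i}(A) ⊗ 1) Ω̂⟩`, where
`σ_s(A) = e^{-isK} A e^{isK}` and `σ_{s-i}(A) = e^{(-is-1)K} A e^{(is+1)K}`. -/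
theorem vacuum_KMS_property
    (n : ℕ) (w : Fin n → ℝ) (hw : ∀ i, 0 < w i) (hsum : ∑ i, w i = 1)
    (lam : Fin n → ℝ) (hlam : ∀ i, lam i = - Real.log (w i))
    (K : Matrix (Fin n) (Fin n) ℂ)
    (hK : K = Matrix.diagonal (fun i => (lam i : ℂ)))
    (Ωf : (Fin n × Fin n) → ℂ)
    (hΩf : ∀ i j, Ωf (i, j) = if i = j then (Real.sqrt (w i) : ℂ) else 0)
    (Ω : EuclideanSpace ℂ (Fin n × Fin n)) (hΩ : Ω = vecE Ωf)
    (σ : ℝ → Matrix (Fin n) (Fin n) ℂ → Matrix (Fin n) (Fin n) ℂ)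
    (hσ : ∀ (s : ℝ) (A : Matrix (Fin n) (Fin n) ℂ),
      σ s A = NormedSpace.exp ((-(Complex.I * s)) • K) * A * NormedSpace.exp ((Complex.I * s) • K))
    (σc : ℝ → Matrix (Fin n) (Fin n) ℂ → Matrix (Fin n) (Fin n) ℂ)
    (hσc : ∀ (s : ℝ) (A : Matrix (Fin n) (Fin n) ℂ),
      σc s A = NormedSpace.exp ((-(Complex.I * s) - 1) • K) * A * NormedSpace.exp ((Complex.I * s + 1) • K)) :
    ∀ (A B : Matrix (Fin n) (Fin n) ℂ) (s : ℝ),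
      ⟪Ω, vecE (((σ s A * B) ⊗ₖ (1 : Matrix (Fin n) (Fin n) ℂ)).mulVec Ωf)⟫_ℂ
        = ⟪Ω, vecE (((B * σc s A) ⊗ₖ (1 : Matrix (Fin n) (Fin n) ℂ)).mulVec Ωf)⟫_ℂ :=
  vacuum_KMS_property_general n w hw lam hlam K hK Ωf hΩf Ω hΩ σ hσ σc hσc
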